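/- Over the field F₂ with two elements, the function (x,y) ↦ 1 + x·y on F₂ × F₂ cannot be written as a hypercube sum of a product of affine linear forms: there do not exist natural numbers n, m and affine linear maps ℓ_1,…,ℓ_m : F₂^{2+n} → F₂ such that for all x, y ∈ F₂ one has 1 + x·y = ∑_{b ∈ F₂^n} ∏_{i=1}^m ℓ_i(x, y, b). (Consequently VNP_1(F₂) ⊊ VNP(F₂).) -/

import Mathlib

open MvPolynomial

noncomputable section

/-- A function `ℕ → ℕ` is polynomially bounded. -/
def PolyBounded (f : ℕ → ℕ) : Prop := ∃ c : ℕ, ∀ n, f n ≤ (n + 2) ^ c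

/-- A sequence of multivariate polynomials is a family: `f n` uses only variables `x_i`
with `i < v n`, for a polynomially bounded `v`. -/
def IsPolyFamily {F : Type} [CommSemiring F] (f : ℕ → MvPolynomial ℕ F) : Prop :=
  ∃ v : ℕ → ℕ, PolyBounded v ∧ ∀ n, ∀ i ∈ (f n).vars, i < v n

/-- Arithmetic formulas over `F` in variables `x_i`, `i : ℕ`: expressions built from
variables and constants by binary additions and multiplications. -/
inductive Formula (F : Type) where
  | var : ℕ → Formula F
  | const : F → Formula F
  | add : Formula F → Formula F → Formula F
  | mul : Formula F → Formula F → Formula F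

namespace Formula

variable {F : Type} [CommSemiring F]

/-- The polynomial computed by an arithmetic formula. -/
def eval : Formula F → MvPolynomial ℕ F
  | var i => X i
  | const c => C c
  | add φ ψ => φ.eval + ψ.eval
  | mul φ ψ => φ.eval * ψ.eval

/-- The size of a formula: the number of (binary) operations. -/
def size : Formula F → ℕ
  | var _ => 0
  | const _ => 0
  | add φ ψ => φ.size + ψ.size + 1
  | mul φ ψ => φ.size + ψ.size + 1

/-- The depth of a formula: the length of the longest root-to-leaf path. -/
def depth : Formula F → ℕ
  | var _ => 0
  | const _ => 0
  | add φ ψ => max φ.depth ψ.depth + 1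
  | mul φ ψ => max φ.depth ψ.depth + 1

end Formula

/-- A general affine linear form `∑ αᵢ xᵢ + β`, i.e. a polynomial of total degree ≤ 1. -/
def IsGenForm {F : Type} [CommSemiring F] (p : MvPolynomial ℕ F) : Prop := p.totalDegree ≤ 1

/-- A single variable or a constant. -/
def IsWeakestForm {F : Type} [CommSemiring F] (p : MvPolynomial ℕ F) : Prop :=
  (∃ i, p = X i) ∨ ∃ c, p = C c

/-- A simple affine linear form `α·xᵢ + β`. -/
def IsWeakForm {F : Type} [CommSemiring F] (p : MvPolynomial ℕ F) : Prop :=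
  ∃ (α β : F) (i : ℕ), p = C α * X i + C β

/-- An affine linear form in at most two variables, `α·xᵢ + β·xⱼ + γ`. -/
def IsWeakPlusForm {F : Type} [CommSemiring F] (p : MvPolynomial ℕ F) : Prop :=
  ∃ (α β γ : F) (i j : ℕ), p = C α * X i + C β * X j + C γ

/-- `ABPComputes form k s p`: some width-`k` algebraic branching program of size `s`, all of
whose matrix entries satisfy the predicate `form`, computes the polynomial `p`; that is,
`p = vᵀ · M_s ⋯ M_1 · w` for vectors `v, w ∈ F^k` and matrices `M_i` with entries of
type `form`. -/
def ABPComputes {F : Type} [CommSemiring F] (form : MvPolynomial ℕ F → Prop)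
    (k s : ℕ) (p : MvPolynomial ℕ F) : Prop :=
  ∃ (v w : Fin k → F) (M : Fin s → Matrix (Fin k) (Fin k) (MvPolynomial ℕ F)),
    (∀ (i : Fin s) (a b : Fin k), form (M i a b)) ∧
    p = dotProduct (fun a => C (v a))
          (Matrix.mulVec (List.ofFn M).prod fun a => C (w a))

/-- The class `VP_k^*`: families computable by width-`k` ABPs, with entries of label
type `form`, of polynomially bounded size. -/
def VPkClass (F : Type) [CommSemiring F] (k : ℕ)
    (form : MvPolynomial ℕ F → Prop) : Set (ℕ → MvPolynomial ℕ F) :=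
  { f | IsPolyFamily f ∧
        ∃ s : ℕ → ℕ, PolyBounded s ∧ ∀ n, ∃ s' ≤ s n, ABPComputes form k s' (f n) }

/-- The class `VPe`: families computable by arithmetic formulas of polynomially
bounded size. -/
def VPe (F : Type) [CommSemiring F] : Set (ℕ → MvPolynomial ℕ F) :=
  { f | IsPolyFamily f ∧
        ∃ s : ℕ → ℕ, PolyBounded s ∧ ∀ n, ∃ φ : Formula F, φ.size ≤ s n ∧ φ.eval = f n }

/-- The inclusion `F[x] → F(ε)[x]`. -/
def liftε (F : Type) [Field F] : MvPolynomial ℕ F →+* MvPolynomial ℕ (RatFunc F) :=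
  MvPolynomial.map (algebraMap F (RatFunc F))

/-- The inclusion `F[ε][x] → F(ε)[x]`. -/
def liftPolyε (F : Type) [Field F] :
    MvPolynomial ℕ (Polynomial F) →+* MvPolynomial ℕ (RatFunc F) :=
  MvPolynomial.map (algebraMap (Polynomial F) (RatFunc F))

/-- The approximation closure of a class `Cl` given over `F(ε)`: families `(f_n)` over `F`
for which there are error polynomials `f_{n;1}, …, f_{n;e(n)}` over `F` such that the family
`g_n = f_n + ε f_{n;1} + ⋯ + ε^{e(n)} f_{n;e(n)}` belongs to `Cl` over `F(ε)`. -/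
def ApproxClosure (F : Type) [Field F]
    (Cl : Set (ℕ → MvPolynomial ℕ (RatFunc F))) : Set (ℕ → MvPolynomial ℕ F) :=
  { f | IsPolyFamily f ∧ ∃ (e : ℕ → ℕ) (ferr : ℕ → ℕ → MvPolynomial ℕ F),
      (fun n => liftε F (f n) + ∑ i ∈ Finset.range (e n),
          C ((RatFunc.X : RatFunc F) ^ (i + 1)) * liftε F (ferr n i)) ∈ Cl }

/-- The poly-approximation closure: as `ApproxClosure`, with the error degree `e(n)`
additionally required to be polynomially bounded. -/
def PolyApproxClosure (F : Type) [Field F]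
    (Cl : Set (ℕ → MvPolynomial ℕ (RatFunc F))) : Set (ℕ → MvPolynomial ℕ F) :=
  { f | IsPolyFamily f ∧ ∃ e : ℕ → ℕ, PolyBounded e ∧
      ∃ ferr : ℕ → ℕ → MvPolynomial ℕ F,
      (fun n => liftε F (f n) + ∑ i ∈ Finset.range (e n),
          C ((RatFunc.X : RatFunc F) ^ (i + 1)) * liftε F (ferr n i)) ∈ Cl }

/-- The hypercube sum `∑_{b ∈ {0,1}^p} g(b, x)`: the first `p` variables of `g` are summed
over all Boolean assignments, and variable `p + i` of `g` is renamed to `x_i`. -/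
def hcSum {F : Type} [CommSemiring F] (p : ℕ) (g : MvPolynomial ℕ F) : MvPolynomial ℕ F :=
  ∑ b : Fin p → Bool,
    MvPolynomial.aeval
      (fun i : ℕ => if h : i < p then (if b ⟨i, h⟩ then 1 else 0) else X (i - p)) g

/-- The nondeterminism closure `N(Cl)`: families `(f_n)` with
`f_n(x) = ∑_{b ∈ {0,1}^{p(n)}} g_{q(n)}(b,x)` for some `(g_n) ∈ Cl` and polynomially
bounded `p`, `q`. -/
def Nclosure {F : Type} [CommSemiring F] (Cl : Set (ℕ → MvPolynomial ℕ F)) :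
    Set (ℕ → MvPolynomial ℕ F) :=
  { f | IsPolyFamily f ∧ ∃ g ∈ Cl, ∃ p q : ℕ → ℕ, PolyBounded p ∧ PolyBounded q ∧
        ∀ n, f n = hcSum (p n) (g (q n)) }

/-- The matrix `Q(f) = [[f, 1], [1, 0]]`. -/
def Qmat {R : Type} [CommSemiring R] (f : MvPolynomial ℕ R) :
    Matrix (Fin 2) (Fin 2) (MvPolynomial ℕ R) := !![f, 1; 1, 0]

/-- A primitive Q-matrix: `Q(ℓ)` for a parametrized affine linear form `ℓ`, i.e. an affine
linear form in the `x`-variables with coefficients in `F(ε)`. -/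
def IsPrimitiveQ (F : Type) [Field F]
    (M : Matrix (Fin 2) (Fin 2) (MvPolynomial ℕ (RatFunc F))) : Prop :=
  ∃ ℓ : MvPolynomial ℕ (RatFunc F), ℓ.totalDegree ≤ 1 ∧ M = Qmat ℓ

/-- `M` can be written as a product of `n` primitive Q-matrices. -/
def IsProdPrimQ (F : Type) [Field F] (n : ℕ)
    (M : Matrix (Fin 2) (Fin 2) (MvPolynomial ℕ (RatFunc F))) : Prop :=
  ∃ L : Fin n → Matrix (Fin 2) (Fin 2) (MvPolynomial ℕ (RatFunc F)),
    (∀ i, IsPrimitiveQ F (L i)) ∧ M = (List.ofFn L).prod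

/-- `M ∈ Q(f) + O(ε^k)`: `M = Q(f) + ε^k · E` for some matrix `E` with entries
in `F[ε][x]`. -/
def InQErr (F : Type) [Field F] (f : MvPolynomial ℕ F) (k : ℕ)
    (M : Matrix (Fin 2) (Fin 2) (MvPolynomial ℕ (RatFunc F))) : Prop :=
  ∃ E : Matrix (Fin 2) (Fin 2) (MvPolynomial ℕ (Polynomial F)),
    M = Qmat (liftε F f) +
      (C ((RatFunc.X : RatFunc F) ^ k) : MvPolynomial ℕ (RatFunc F)) • E.map (liftPolyε F)

/-- `M` has entries in `F[ε][x]` and error degree at most `e`: every entry has degree at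
most `e` in `ε`. -/
def ErrDegLE (F : Type) [Field F]
    (M : Matrix (Fin 2) (Fin 2) (MvPolynomial ℕ (RatFunc F))) (e : ℕ) : Prop :=
  ∃ E : Matrix (Fin 2) (Fin 2) (MvPolynomial ℕ (Polynomial F)),
    M = E.map (liftPolyε F) ∧
    ∀ (a b : Fin 2) (m : ℕ →₀ ℕ), (MvPolynomial.coeff m (E a b)).natDegree ≤ e

/-- The generalized Fibonacci polynomials: `F_0 = 1`, `F_1 = x_1`,
`F_n = x_n · F_{n-1} + F_{n-2}` (variables indexed from 0). -/
def fibPoly (R : Type) [CommSemiring R] : ℕ → MvPolynomial ℕ R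
  | 0 => 1
  | 1 => X 0
  | n + 2 => X (n + 1) * fibPoly R (n + 1) + fibPoly R n

/-- `f` is a degeneration of the Fibonacci polynomial `F_m` witnessing border Fibonacci
complexity at most `m`: there are parametrized affine linear forms `ℓ_1, …, ℓ_m` with
`F_m(ℓ_1, …, ℓ_m) = f + ε·g` for some `g ∈ F[ε][x]`. -/
def FibBorderProj (F : Type) [Field F] (f : MvPolynomial ℕ F) (m : ℕ) : Prop :=
  ∃ ℓ : ℕ → MvPolynomial ℕ (RatFunc F),
    (∀ i, (ℓ i).totalDegree ≤ 1) ∧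
    ∃ g : MvPolynomial ℕ (Polynomial F),
      MvPolynomial.aeval ℓ (fibPoly (RatFunc F) m) =
        liftε F f + C (RatFunc.X : RatFunc F) * liftPolyε F g

/-!
Over `F₂` a product of affine forms is the indicator of the solutions of an affine system, so
`∑_b ∏_i ℓ_i(x, y, b)` is the parity of the number of `b` with `L b = c(x, y)`, where `L` is
linear and `c` is affine in `(x, y)`. That number is `|ker L|` when `c(x, y) ∈ range L` and `0`
otherwise, so the set of points where the sum is `1` is either empty or the preimage of a
subspace under an affine map, hence closed under `z₁ + z₂ - z₀`. The support
`{(0,0), (1,0), (0,1)}` of `1 + xy` is not: it misses `(1,1)`.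

A width-one ABP with affine entries computes a product of affine forms, so the same argument
keeps the family `1 + x₀x₁` out of `N(VP₁)`, while it is in `N(VPe)` with a formula of size 2.
-/

open Finset

theorem Finsupp.eq_zero_or_eq_single_one_of_sum_le_one {σ : Type*} {d : σ →₀ ℕ}
    (h : (d.sum fun _ e => e) ≤ 1) : d = 0 ∨ ∃ k, d = Finsupp.single k 1 := by
  classical
  have hcard : Multiset.card (Finsupp.toMultiset d) ≤ 1 := (Finsupp.card_toMultiset d).trans_le h
  rcases Nat.le_one_iff_eq_zero_or_eq_one.1 hcard with h0 | h1
  · left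
    rw [Finsupp.toMultiset_eq_iff.1 (Multiset.card_eq_zero.1 h0), Multiset.toFinsupp_zero]
  · obtain ⟨k, hk⟩ := Multiset.card_eq_one.1 h1
    exact Or.inr ⟨k, by rw [Finsupp.toMultiset_eq_iff.1 hk, Multiset.toFinsupp_singleton]⟩

namespace MvPolynomial

section

variable {R σ : Type*} [CommSemiring R]

theorem eq_C_add_sum_of_totalDegree_le_one {p : MvPolynomial σ R}
    (hp : p.totalDegree ≤ 1) {s : Finset σ} (hs : p.vars ⊆ s) :
    p = C (coeff 0 p) + ∑ k ∈ s, C (coeff (Finsupp.single k 1) p) * X k := by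
  classical
  have hsupp : p.support ⊆ insert 0 (s.image (Finsupp.single · 1)) := by
    intro d hd
    rcases Finsupp.eq_zero_or_eq_single_one_of_sum_le_one ((le_totalDegree hd).trans hp) with
      rfl | ⟨k, rfl⟩
    · exact mem_insert_self _ _
    · refine mem_insert_of_mem (mem_image_of_mem _ (hs ?_))
      exact (mem_vars_iff_mem_support k).2 ⟨_, hd, by simp⟩
  conv_lhs => rw [p.as_sum, sum_subset hsupp fun d _ hd => by simp [notMem_support_iff.1 hd]]
  rw [sum_insert (by simp [eq_comm]),
    sum_image fun _ _ _ _ h => Finsupp.single_left_injective one_ne_zero h]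
  simp [C_mul_X_eq_monomial]

theorem aeval_eq_of_totalDegree_le_one {S : Type*} [CommSemiring S] [Algebra R S]
    (f : σ → S) {p : MvPolynomial σ R} (hp : p.totalDegree ≤ 1) {s : Finset σ}
    (hs : p.vars ⊆ s) :
    aeval f p = algebraMap R S (coeff 0 p) + ∑ k ∈ s, coeff (Finsupp.single k 1) p • f k := by
  conv_lhs => rw [eq_C_add_sum_of_totalDegree_le_one hp hs]
  simp [Algebra.smul_def]

end

theorem eval_add_add_eval_zero {R σ : Type*} [CommRing R] {p : MvPolynomial σ R}
    (hp : p.totalDegree ≤ 1) (u v : σ → R) :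
    eval (u + v) p + eval 0 p = eval u p + eval v p := by
  have expand (w : σ → R) :
      eval w p = coeff 0 p + ∑ k ∈ p.vars, coeff (Finsupp.single k 1) p * w k := by
    simpa using aeval_eq_of_totalDegree_le_one w hp subset_rfl
  simp only [expand, Pi.add_apply, Pi.zero_apply, mul_add, mul_zero, sum_add_distrib,
    sum_const_zero]
  ring

section Truncate

variable {R : Type*} [CommSemiring R]

def truncate (N : ℕ) : MvPolynomial ℕ R →ₐ[R] MvPolynomial ℕ R :=
  aeval fun k => if k < N then X k else 0

theorem truncate_eq_self {N : ℕ} {p : MvPolynomial ℕ R} (hp : ∀ k ∈ p.vars, k < N) :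
    truncate N p = p := by
  conv_rhs => rw [← aeval_X_left_apply p]
  rw [truncate, aeval_def, aeval_def]
  exact eval₂_congr _ _ _ fun hk hd =>
    if_pos (hp _ ((mem_vars_iff_mem_support _).2 ⟨_, mem_support_iff.2 hd, hk⟩))

theorem truncate_eq_of_totalDegree_le_one (N : ℕ) {p : MvPolynomial ℕ R}
    (hp : p.totalDegree ≤ 1) :
    truncate N p = C (coeff 0 p) + ∑ k ∈ range N, C (coeff (Finsupp.single k 1) p) * X k := by
  classical
  rw [truncate, aeval_eq_of_totalDegree_le_one _ hp subset_union_left (s := p.vars ∪ range N),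
    ← sum_subset (subset_union_right (s₁ := p.vars))]
  · simp only [algebraMap_eq, smul_eq_C_mul]
    exact congrArg _ (sum_congr rfl fun k hk => by rw [if_pos (mem_range.1 hk)])
  · intro k _ hk
    simp [not_lt.2 (by simpa using hk)]

end Truncate

end MvPolynomial

theorem ZMod.prod_eq_ite_forall_eq_one {ι : Type*} [Fintype ι] (f : ι → ZMod 2) :
    ∏ i, f i = if ∀ i, f i = 1 then 1 else 0 := by
  have h01 (i : ι) : f i = if f i = 1 then 1 else 0 := by
    generalize f i = z
    revert z
    decide
  rw [prod_congr rfl fun i _ => h01 i, prod_boole]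
  simp

section CountingSolutions

variable {B ι : Type*} [AddGroup B] [Fintype B] [Fintype ι]

theorem sum_prod_add_eq_card_fiber (L : B →+ ι → ZMod 2) (a : ι → ZMod 2) :
    ∑ b, ∏ i, (a i + L b i) = (#{b | L b = 1 - a} : ZMod 2) := by
  have hiff (b : B) : (∀ i, a i + L b i = 1) ↔ L b = 1 - a := by
    rw [eq_sub_iff_add_eq', funext_iff]
    rfl
  simp only [ZMod.prod_eq_ite_forall_eq_one, hiff, sum_boole]

theorem sum_prod_add_eq_ite_mem_range (L : B →+ ι → ZMod 2) (a : ι → ZMod 2) :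
    ∑ b, ∏ i, (a i + L b i) = if 1 - a ∈ L.range then (#{b | L b = 0} : ZMod 2) else 0 := by
  rw [sum_prod_add_eq_card_fiber]
  split_ifs with h
  · rw [AddMonoidHom.card_fiber_eq_of_mem_range L (AddMonoidHom.mem_range.1 h) ⟨0, map_zero L⟩]
  · rw [card_eq_zero.2 (filter_eq_empty_iff.2 fun b _ hb => h ⟨b, hb⟩), Nat.cast_zero]

theorem not_forall_one_add_mul_eq_sum_prod (L : B →+ ι → ZMod 2)
    (a : ZMod 2 → ZMod 2 → ι → ZMod 2) (ha : a 1 1 + a 0 0 = a 1 0 + a 0 1) :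
    ¬ ∀ x y : ZMod 2, 1 + x * y = ∑ b, ∏ i, (a x y i + L b i) := by
  intro h
  simp only [sum_prod_add_eq_ite_mem_range] at h
  have mem (x y : ZMod 2) (hxy : x * y = 0) :
      1 - a x y ∈ L.range ∧ (#{b | L b = 0} : ZMod 2) = 1 := by
    have hxy' := h x y
    rw [hxy, add_zero] at hxy'
    split_ifs at hxy' with hr
    · exact ⟨hr, hxy'.symm⟩
    · exact absurd hxy' one_ne_zero
  obtain ⟨h00, hker⟩ := mem 0 0 (mul_zero 0)
  have h11 : 1 - a 1 1 ∈ L.range := by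
    have hc : 1 - a 1 1 = (1 - a 1 0) + (1 - a 0 1) - (1 - a 0 0) := by
      linear_combination -ha
    rw [hc]
    exact sub_mem (add_mem (mem 1 0 (mul_zero 1)).1 (mem 0 1 (zero_mul 1)).1) h00
  have h11' := h 1 1
  rw [if_pos h11, hker] at h11'
  exact absurd h11' (by decide)

end CountingSolutions

section HypercubeSum

open MvPolynomial

theorem MvPolynomial.eval_aeval {R σ τ : Type*} [CommSemiring R] (e : τ → R)
    (f : σ → MvPolynomial τ R) (p : MvPolynomial σ R) :
    eval e (aeval f p) = eval (fun k => eval e (f k)) p := by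
  rw [aeval_eq_bind₁]
  exact eval₂Hom_bind₁ _ _ _ _

def prependTuple {R : Type*} {P : ℕ} (b : Fin P → R) (e : ℕ → R) : ℕ → R :=
  fun k => if h : k < P then b ⟨k, h⟩ else e (k - P)

theorem prependTuple_add {R : Type*} [Add R] {P : ℕ} (b b' : Fin P → R) (e e' : ℕ → R) :
    prependTuple (b + b') (e + e') = prependTuple b e + prependTuple b' e' := by
  funext k
  by_cases h : k < P <;> simp [prependTuple, h]

theorem prependTuple_zero {R : Type*} [Zero R] {P : ℕ} :
    prependTuple (0 : Fin P → R) 0 = 0 := by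
  funext k
  by_cases h : k < P <;> simp [prependTuple, h]

theorem eval_hcSum {F : Type} [CommSemiring F] (P : ℕ) (g : MvPolynomial ℕ F) (e : ℕ → F) :
    eval e (hcSum P g) =
      ∑ b : Fin P → Bool, eval (prependTuple (fun j => if b j then 1 else 0) e) g := by
  simp only [hcSum, map_sum, eval_aeval]
  congr! with b _ k
  simp only [prependTuple]
  split_ifs <;> simp

theorem hcSum_zero {F : Type} [CommSemiring F] (g : MvPolynomial ℕ F) : hcSum 0 g = g := by
  simp [hcSum]

def boolEquivZModTwo : Bool ≃ ZMod 2 where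
  toFun b := if b then 1 else 0
  invFun z := z = 1
  left_inv := by decide
  right_inv := by decide

theorem sum_bool_cube_eq {M : Type*} [AddCommMonoid M] (P : ℕ) (F : (Fin P → ZMod 2) → M) :
    ∑ b : Fin P → Bool, F (fun j => if b j then 1 else 0) = ∑ b, F b :=
  Fintype.sum_equiv (Equiv.piCongrRight fun _ => boolEquivZModTwo) _ _ fun _ => rfl

theorem hcSum_prod_ne_one_add_X_mul_X (P : ℕ) {ι : Type*} [Fintype ι]
    (ℓ : ι → MvPolynomial ℕ (ZMod 2)) (hℓ : ∀ i, (ℓ i).totalDegree ≤ 1) :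
    hcSum P (∏ i, ℓ i) ≠ 1 + X 0 * X 1 := by
  intro h
  have affine (i : ι) (u v : ℕ → ZMod 2) :
      eval (u + v) (ℓ i) = eval u (ℓ i) + eval v (ℓ i) - eval 0 (ℓ i) :=
    eq_sub_of_add_eq (eval_add_add_eval_zero (hℓ i) u v)
  let point (x y : ZMod 2) : ℕ → ZMod 2 := Pi.single 0 x + Pi.single 1 y
  let L : (Fin P → ZMod 2) →+ ι → ZMod 2 :=
    AddMonoidHom.mk' (fun b i => eval (prependTuple b 0) (ℓ i) - eval 0 (ℓ i)) fun b b' => by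
      funext i
      simp only [Pi.add_apply]
      rw [← add_zero (0 : ℕ → ZMod 2), prependTuple_add, affine, add_zero]
      ring
  refine not_forall_one_add_mul_eq_sum_prod L
    (fun x y i => eval (prependTuple (0 : Fin P → ZMod 2) (point x y)) (ℓ i)) ?_ fun x y => ?_
  · funext i
    have h11 : point 1 1 = point 1 0 + point 0 1 := by simp [point]
    have h00 : point 0 0 = 0 := by simp [point]
    have hsum := affine i (prependTuple (0 : Fin P → ZMod 2) (point 1 0))
      (prependTuple (0 : Fin P → ZMod 2) (point 0 1))
    rw [← prependTuple_add, add_zero, ← h11] at hsum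
    simp only [Pi.add_apply, hsum, h00, prependTuple_zero]
    ring
  · have split (b : Fin P → ZMod 2) (i : ι) : eval (prependTuple b (point x y)) (ℓ i) =
        eval (prependTuple (0 : Fin P → ZMod 2) (point x y)) (ℓ i) + L b i := by
      have hpt := prependTuple_add (0 : Fin P → ZMod 2) b (point x y) 0
      rw [zero_add, add_zero] at hpt
      rw [hpt, affine, add_sub_assoc]
      rfl
    calc 1 + x * y = eval (point x y) (1 + X 0 * X 1) := by simp [point]
      _ = ∑ b, eval (prependTuple b (point x y)) (∏ i, ℓ i) := by
        rw [← h, eval_hcSum, sum_bool_cube_eq (F := fun b => eval (prependTuple b (point x y)) _)]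
      _ = _ := sum_congr rfl fun b _ => by
        rw [map_prod]
        exact prod_congr rfl fun i _ => split b i

end HypercubeSum

theorem PolyBounded.const (k : ℕ) : PolyBounded fun _ => k :=
  ⟨k, fun _ => Nat.lt_two_pow_self.le.trans (Nat.pow_le_pow_left (by omega) k)⟩

theorem PolyBounded.mul {f g : ℕ → ℕ} (hf : PolyBounded f) (hg : PolyBounded g) :
    PolyBounded fun n => f n * g n := by
  obtain ⟨a, ha⟩ := hf
  obtain ⟨b, hb⟩ := hg
  exact ⟨a + b, fun n => pow_add (n + 2) a b ▸ Nat.mul_le_mul (ha n) (hb n)⟩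

theorem PolyBounded.add {f g : ℕ → ℕ} (hf : PolyBounded f) (hg : PolyBounded g) :
    PolyBounded fun n => f n + g n := by
  obtain ⟨a, ha⟩ := hf
  obtain ⟨b, hb⟩ := hg
  refine ⟨a + b + 1, fun n => ?_⟩
  have hfa : (n + 2) ^ a ≤ (n + 2) ^ (a + b) := Nat.pow_le_pow_right (by omega) (by omega)
  have hgb : (n + 2) ^ b ≤ (n + 2) ^ (a + b) := Nat.pow_le_pow_right (by omega) (by omega)
  calc f n + g n ≤ (n + 2) ^ (a + b) * 2 := by linarith [ha n, hb n]
    _ ≤ (n + 2) ^ (a + b + 1) := by rw [pow_succ]; exact Nat.mul_le_mul_left _ (by omega)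

theorem ABPComputes.exists_eq_C_mul_prod_mul_C {F : Type} [CommSemiring F]
    {form : MvPolynomial ℕ F → Prop} {s : ℕ} {p : MvPolynomial ℕ F}
    (h : ABPComputes form 1 s p) :
    ∃ (v w : F) (ℓ : Fin s → MvPolynomial ℕ F), (∀ i, form (ℓ i)) ∧
      p = C v * (∏ i, ℓ i) * C w := by
  obtain ⟨v, w, M, hM, rfl⟩ := h
  refine ⟨v 0, w 0, fun i => M i 0 0, fun i => hM i 0 0, ?_⟩
  have hprod : (List.ofFn M).prod 0 0 = ∏ i, M i 0 0 := by
    have := map_list_prod (Matrix.uniqueRingEquiv (m := Fin 1) (A := MvPolynomial ℕ F)).toRingHom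
      (List.ofFn M)
    rwa [List.map_ofFn, List.prod_ofFn] at this
  simp [dotProduct, Matrix.mulVec, hprod, mul_assoc]

namespace Formula

variable {F : Type} [CommSemiring F]

def affine (c₀ : F) (c : ℕ → F) : ℕ → Formula F
  | 0 => const c₀
  | N + 1 => add (affine c₀ c N) (mul (const (c N)) (var N))

omit [CommSemiring F] in
theorem size_affine (c₀ : F) (c : ℕ → F) (N : ℕ) : (affine c₀ c N).size = 2 * N := by
  induction N with
  | zero => rfl
  | succ N ih => simp only [affine, size, ih]; omega

theorem eval_affine (c₀ : F) (c : ℕ → F) (N : ℕ) :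
    (affine c₀ c N).eval = C c₀ + ∑ k ∈ range N, C (c k) * X k := by
  induction N with
  | zero => simp [affine, eval]
  | succ N ih => simp [affine, eval, ih, sum_range_succ, add_assoc]

def listProd : List (Formula F) → Formula F
  | [] => const 1
  | φ :: l => mul φ (listProd l)

theorem size_listProd (l : List (Formula F)) :
    (listProd l).size = (l.map size).sum + l.length := by
  induction l with
  | nil => rfl
  | cons φ l ih =>
    simp only [listProd, size, ih, List.map_cons, List.sum_cons, List.length_cons]
    omega

theorem eval_listProd (l : List (Formula F)) : (listProd l).eval = (l.map eval).prod := by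
  induction l with
  | nil => simp [listProd, eval]
  | cons φ l ih => simp [listProd, eval, ih]

theorem exists_eval_eq_prod_truncate (N : ℕ) {s : ℕ} (ℓ : Fin s → MvPolynomial ℕ F)
    (hℓ : ∀ i, (ℓ i).totalDegree ≤ 1) :
    ∃ φ : Formula F, φ.size = s * (2 * N + 1) ∧ φ.eval = ∏ i, truncate N (ℓ i) := by
  refine ⟨listProd (List.ofFn fun i =>
    affine (coeff 0 (ℓ i)) (fun k => coeff (Finsupp.single k 1) (ℓ i)) N), ?_, ?_⟩
  · simp [size_listProd, size_affine, List.sum_ofFn]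
    ring
  · simp [eval_listProd, List.map_ofFn, List.prod_ofFn, eval_affine,
      truncate_eq_of_totalDegree_le_one _ (hℓ _)]

end Formula

theorem VPkClass_one_subset_VPe (F : Type) [CommSemiring F] :
    VPkClass F 1 IsGenForm ⊆ VPe F := by
  rintro f ⟨hfam, s, hs, habp⟩
  obtain ⟨v, hv, hvars⟩ := id hfam
  refine ⟨hfam, fun n => s n * (2 * v n + 1) + 2,
    (hs.mul (((PolyBounded.const 2).mul hv).add (PolyBounded.const 1))).add (PolyBounded.const 2),
    fun n => ?_⟩
  obtain ⟨s', hs', hn⟩ := habp n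
  obtain ⟨a, b, ℓ, hℓ, hf⟩ := hn.exists_eq_C_mul_prod_mul_C
  -- the entries may involve variables beyond `v n`; truncating them does not change `f n`
  obtain ⟨φ, hsize, heval⟩ := Formula.exists_eval_eq_prod_truncate (v n) ℓ hℓ
  refine ⟨.mul (.mul (.const a) φ) (.const b), ?_, ?_⟩
  · have := Nat.mul_le_mul_right (2 * v n + 1) hs'
    simp only [Formula.size, hsize]
    omega
  · rw [← truncate_eq_self (hvars n), hf]
    simp [Formula.eval, heval, map_prod, truncate]

theorem Nclosure_mono {F : Type} [CommSemiring F] {Cl₁ Cl₂ : Set (ℕ → MvPolynomial ℕ F)}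
    (h : Cl₁ ⊆ Cl₂) : Nclosure Cl₁ ⊆ Nclosure Cl₂ := by
  rintro f ⟨hfam, g, hg, rest⟩
  exact ⟨hfam, g, h hg, rest⟩

section OneAddXMulX

variable {F : Type} [CommSemiring F]

theorem isPolyFamily_one_add_X_mul_X [Nontrivial F] :
    IsPolyFamily fun _ => (1 + X 0 * X 1 : MvPolynomial ℕ F) := by
  refine ⟨fun _ => 2, PolyBounded.const 2, fun _ i hi => ?_⟩
  have hi' := vars_mul _ _ (by simpa [vars_one] using vars_add_subset _ _ hi)
  simp only [vars_X, mem_union, mem_singleton] at hi'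
  show i < 2
  omega

theorem one_add_X_mul_X_mem_Nclosure_VPe [Nontrivial F] :
    (fun _ => (1 + X 0 * X 1 : MvPolynomial ℕ F)) ∈ Nclosure (VPe F) := by
  refine ⟨isPolyFamily_one_add_X_mul_X, _, ⟨isPolyFamily_one_add_X_mul_X, fun _ => 2,
    PolyBounded.const 2, fun _ => ⟨.add (.const 1) (.mul (.var 0) (.var 1)), ?_, ?_⟩⟩,
    fun _ => 0, fun _ => 0, PolyBounded.const 0, PolyBounded.const 0,
    fun _ => (hcSum_zero _).symm⟩
  · simp [Formula.size]
  · simp [Formula.eval]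

end OneAddXMulX

theorem one_add_X_mul_X_notMem_Nclosure_VPkClass_one :
    (fun _ => (1 + X 0 * X 1 : MvPolynomial ℕ (ZMod 2))) ∉
      Nclosure (VPkClass (ZMod 2) 1 IsGenForm) := by
  rintro ⟨-, g, ⟨-, s, -, habp⟩, p, q, -, -, hrep⟩
  obtain ⟨s', -, hq⟩ := habp (q 0)
  obtain ⟨v, w, ℓ, hℓ, hg⟩ := hq.exists_eq_C_mul_prod_mul_C
  refine hcSum_prod_ne_one_add_X_mul_X (p 0) (Sum.elim ℓ ![C v, C w]) ?_ ?_
  · rintro (i | i)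
    · exact hℓ i
    · fin_cases i <;> simp [totalDegree_C]
  · refine Eq.trans ?_ (hrep 0).symm
    rw [hg, Fintype.prod_sum_type, Fin.prod_univ_two]
    simp only [Sum.elim_inl, Sum.elim_inr, Matrix.cons_val_zero, Matrix.cons_val_one]
    congr 1
    ring

/-- over `F₂`, the function `(x, y) ↦ 1 + x·y` is not a hypercube sum of a
product of affine linear forms; consequently `VNP_1(F₂) ⊊ VNP(F₂)`. -/
theorem statement19 :
    (¬ ∃ (n m : ℕ) (α₀ α₁ α₂ : Fin m → ZMod 2) (β : Fin m → Fin n → ZMod 2),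
      ∀ x y : ZMod 2,
        1 + x * y =
          ∑ b : Fin n → ZMod 2, ∏ i : Fin m,
            (α₀ i + α₁ i * x + α₂ i * y + ∑ j : Fin n, β i j * b j)) ∧
    Nclosure (VPkClass (ZMod 2) 1 IsGenForm) ⊂ Nclosure (VPe (ZMod 2)) := by
  refine ⟨?_, (Nclosure_mono (VPkClass_one_subset_VPe _)).ssubset_of_not_subset
    fun h => one_add_X_mul_X_notMem_Nclosure_VPkClass_one (h one_add_X_mul_X_mem_Nclosure_VPe)⟩
  rintro ⟨n, m, α₀, α₁, α₂, β, h⟩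
  exact not_forall_one_add_mul_eq_sum_prod (Matrix.mulVecLin β).toAddMonoidHom
    (fun x y i => α₀ i + α₁ i * x + α₂ i * y) (by funext i; simp; ring) h
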